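/- arXiv:0710.5772 — 3 statements merged into one kernel-verified Lean document; each statement's English description precedes it below -/
import Mathlib

section
/- Let V and W be finite-dimensional vector spaces, π: V* → V and ♯: W* → W linear maps (sharp maps of bivectors), and let C ⊆ W be a linear subspace. Let f: V → W be a surjective linear map satisfying f ∘ π ∘ f* = ♯ (f is a 'Poisson' linear map). Then dim( f⁻¹(C) + π((f⁻¹(C))°) ) = dim( C + ♯(C°) ) + dim ker f, where (·)° denotes the annihilator. -/
lemma dualAnnihilator_comap_aux {V W : Type*}
    [AddCommGroup V] [Module ℝ V] [FiniteDimensional ℝ V]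
    [AddCommGroup W] [Module ℝ W] [FiniteDimensional ℝ W]
    (C : Submodule ℝ W) (f : V →ₗ[ℝ] W) (hf : Function.Surjective f) :
    (C.comap f).dualAnnihilator = C.dualAnnihilator.map f.dualMap := by
  apply le_antisymm
  · intro η hη
    rw [Submodule.mem_dualAnnihilator] at hη
    have hker : η ∈ (LinearMap.ker f).dualAnnihilator := by
      rw [Submodule.mem_dualAnnihilator]
      intro v hv
      exact hη v (by simp [Submodule.mem_comap, LinearMap.mem_ker.mp hv])
    rw [← LinearMap.range_dualMap_eq_dualAnnihilator_ker] at hker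
    obtain ⟨ξ, hξ⟩ := hker
    refine Submodule.mem_map.mpr ⟨ξ, ?_, hξ⟩
    rw [Submodule.mem_dualAnnihilator]
    intro w hw
    obtain ⟨v, rfl⟩ := hf w
    have h1 : ξ (f v) = η v := by
      simpa using congrArg (fun g => g v) hξ
    exact h1.trans (hη v hw)
  · rintro _ ⟨ξ, hξ, rfl⟩
    rw [Submodule.mem_dualAnnihilator]
    intro v hv
    exact (Submodule.mem_dualAnnihilator ξ).mp hξ (f v) hv

/-- Linear-algebra content of: the preimage of a pre-Poisson submanifold under a
surjective submersive Poisson map is pre-Poisson. If `f : V → W` is surjective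
linear with `f ∘ π ∘ f* = ♯`, and `C ⊆ W` a subspace, then
`dim(f⁻¹C + π((f⁻¹C)°)) = dim(C + ♯(C°)) + dim ker f`. -/
theorem prePoisson_preimage_rank {V W : Type*}
    [AddCommGroup V] [Module ℝ V] [FiniteDimensional ℝ V]
    [AddCommGroup W] [Module ℝ W] [FiniteDimensional ℝ W]
    (π : Module.Dual ℝ V →ₗ[ℝ] V) (sharp : Module.Dual ℝ W →ₗ[ℝ] W)
    (C : Submodule ℝ W) (f : V →ₗ[ℝ] W) (hf : Function.Surjective f)
    (hPoisson : f ∘ₗ π ∘ₗ f.dualMap = sharp) :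
    Module.finrank ℝ
        ↥(C.comap f ⊔ Submodule.map π (C.comap f).dualAnnihilator) =
      Module.finrank ℝ ↥(C ⊔ Submodule.map sharp C.dualAnnihilator) +
        Module.finrank ℝ ↥(LinearMap.ker f) := by
  set S := C.comap f ⊔ Submodule.map π (C.comap f).dualAnnihilator with hS
  have hmap : S.map f = C ⊔ Submodule.map sharp C.dualAnnihilator := by
    rw [hS, Submodule.map_sup]
    congr 1
    · rw [Submodule.map_comap_eq, LinearMap.range_eq_top.mpr hf, top_inf_eq]
    · rw [dualAnnihilator_comap_aux C f hf, ← Submodule.map_comp, ← Submodule.map_comp,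
        LinearMap.comp_assoc, hPoisson]
  have hker : LinearMap.ker f ≤ S := by
    refine le_trans ?_ le_sup_left
    intro v hv
    simp [Submodule.mem_comap, LinearMap.mem_ker.mp hv]
  have hrn := LinearMap.finrank_range_add_finrank_ker (f.domRestrict S)
  have hrange : LinearMap.range (f.domRestrict S) = S.map f := by
    ext w; simp [LinearMap.mem_range, Submodule.mem_map]
  have hkereq : Module.finrank ℝ ↥(LinearMap.ker (f.domRestrict S)) =
      Module.finrank ℝ ↥(LinearMap.ker f) := by
    rw [LinearMap.ker_domRestrict]
    exact (Submodule.comapSubtypeEquivOfLe hker).finrank_eq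
  rw [hrange, hmap, hkereq] at hrn
  rw [← hrn]
end

section
/- Let (V, Ω) be a finite-dimensional symplectic vector space, C ⊆ V a subspace, and R ⊆ V a complement of C + C^Ω in V (i.e. V = (C + C^Ω) ⊕ R). Then W := C ⊕ R is a symplectic subspace of V (Ω|_W is nondegenerate) and C is a coisotropic subspace of (W, Ω|_W), i.e. the Ω|_W-orthogonal of C inside W is contained in C. -/
/-- The symplectic orthogonal `W^Ω = {v : Ω(v,w) = 0 ∀ w ∈ W}` of a subspace. -/
def sympOrth {V : Type*} [AddCommGroup V] [Module ℝ V]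
    (Ω : LinearMap.BilinForm ℝ V) (W : Submodule ℝ V) : Submodule ℝ V where
  carrier := {v | ∀ w ∈ W, Ω v w = 0}
  add_mem' := by intro a b ha hb w hw; simp [ha w hw, hb w hw]
  zero_mem' := by intro w hw; simp
  smul_mem' := by intro c a ha w hw; simp [ha w hw]

/-- Linear-algebra heart of the coisotropic embedding theorem: if `(V,Ω)` is
symplectic, `C ⊆ V` a subspace and `R` a complement of `C + C^Ω` in `V`, then
`W := C ⊕ R` is a symplectic subspace and `C` is coisotropic in `(W, Ω|_W)`. -/
theorem coisotropic_embedding_linear {V : Type*} [AddCommGroup V] [Module ℝ V]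
    [FiniteDimensional ℝ V] (Ω : LinearMap.BilinForm ℝ V)
    (hskew : ∀ v w : V, Ω v w = - Ω w v)
    (hnondeg : ∀ v : V, (∀ w : V, Ω v w = 0) → v = 0)
    (C R : Submodule ℝ V)
    (hdisj : (C ⊔ sympOrth Ω C) ⊓ R = ⊥)
    (hspan : (C ⊔ sympOrth Ω C) ⊔ R = ⊤) :
    (∀ w ∈ C ⊔ R, (∀ u ∈ C ⊔ R, Ω w u = 0) → w = 0) ∧
    (∀ w ∈ C ⊔ R, (∀ c ∈ C, Ω w c = 0) → w ∈ C) := by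
  have key : ∀ w ∈ C ⊔ R, (∀ c ∈ C, Ω w c = 0) → w ∈ C := by
    intro w hw hwC
    obtain ⟨c, hc, r, hr, rfl⟩ := Submodule.mem_sup.mp hw
    have hmem : c + r ∈ sympOrth Ω C := hwC
    have hr0 : r ∈ (C ⊔ sympOrth Ω C) ⊓ R := by
      refine ⟨?_, hr⟩
      have hrr : r = (c + r) - c := by abel
      rw [hrr]
      exact Submodule.sub_mem _ (Submodule.mem_sup_right hmem)
        (Submodule.mem_sup_left hc)
    rw [hdisj] at hr0
    simp only [Submodule.mem_bot] at hr0
    simpa [hr0] using hc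
  refine ⟨?_, key⟩
  intro w hw h
  have hworth : ∀ c ∈ C, Ω w c = 0 := fun c hc => h c (Submodule.mem_sup_left hc)
  have hwC : w ∈ C := key w hw hworth
  apply hnondeg
  intro v
  have hv : v ∈ (C ⊔ sympOrth Ω C) ⊔ R := hspan ▸ Submodule.mem_top
  obtain ⟨a, ha, b, hb, rfl⟩ := Submodule.mem_sup.mp hv
  obtain ⟨c, hc, x, hx, rfl⟩ := Submodule.mem_sup.mp ha
  have h1 : Ω w c = 0 := hworth c hc
  have h2 : Ω w x = 0 := by rw [hskew]; exact neg_eq_zero.mpr (hx w hwC)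
  have h3 : Ω w b = 0 := h b (Submodule.mem_sup_right hb)
  simp [map_add, h1, h2, h3]
end

section
/- Let V, W be finite-dimensional vector spaces equipped with skew-symmetric linear maps π₁: V* → V and π₂: W* → W, and let φ: V → W be linear. Then φ ∘ π₁ ∘ φ* = π₂ if and only if the graph of φ is a coisotropic subspace of V × W with respect to the bivector π₁ ⊕ (−π₂), i.e. (π₁ ⊕ (−π₂))((graph φ)°) ⊆ graph φ. -/
/-- Linear-algebra version of Weinstein's theorem: a linear map `φ : V → W`
between 'Poisson vector spaces' (with skew bivectors `π₁, π₂`) is Poisson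
(i.e. `φ ∘ π₁ ∘ φ* = π₂`) iff its graph is coisotropic in `V × W` with respect
to `π₁ ⊕ (−π₂)`: every `(ξ,η)` annihilating the graph (`ξ(v) + η(φ v) = 0` for
all `v`) is mapped by the bivector to an element `(π₁ξ, −π₂η)` of the graph. -/
theorem poisson_map_iff_graph_coisotropic {V W : Type*}
    [AddCommGroup V] [Module ℝ V] [FiniteDimensional ℝ V]
    [AddCommGroup W] [Module ℝ W] [FiniteDimensional ℝ W]
    (π₁ : Module.Dual ℝ V →ₗ[ℝ] V) (π₂ : Module.Dual ℝ W →ₗ[ℝ] W)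
    (hskew₁ : ∀ ξ η : Module.Dual ℝ V, ξ (π₁ η) = - η (π₁ ξ))
    (hskew₂ : ∀ ξ η : Module.Dual ℝ W, ξ (π₂ η) = - η (π₂ ξ))
    (φ : V →ₗ[ℝ] W) :
    φ ∘ₗ π₁ ∘ₗ φ.dualMap = π₂ ↔
      ∀ (ξ : Module.Dual ℝ V) (η : Module.Dual ℝ W),
        (∀ v : V, ξ v + η (φ v) = 0) →
        (π₁ ξ, -(π₂ η)) ∈ LinearMap.graph φ := by
  constructor
  · intro h ξ η hann
    have hξ : ξ = -(φ.dualMap η) := by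
      ext v
      have := hann v
      simp only [LinearMap.neg_apply, LinearMap.dualMap_apply]
      linarith
    rw [LinearMap.mem_graph_iff]
    have := congrArg (fun f => f η) h
    simp only [LinearMap.comp_apply] at this
    simp [hξ, this]
  · intro h
    ext η
    have := h (-(φ.dualMap η)) η (by intro v; simp)
    rw [LinearMap.mem_graph_iff] at this
    simp only [LinearMap.comp_apply, map_neg] at this ⊢
    exact neg_injective this.symm
end
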